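/- Let X, Y be NUTS and t a NUTS morphism X → Y. Then !t = {([a₁,…,aₙ],[b₁,…,bₙ]) | ∀i (aᵢ,bᵢ) ∈ t} is a NUTS morphism !X → !Y. Moreover the dereliction relation der_X = {([a],a) | a ∈ |X|} is a NUTS morphism !X → X and the digging relation dig_X = {(m₁+⋯+mₙ, [m₁,…,mₙ]) | mᵢ ∈ Mfin(|X|)} is a NUTS morphism !X → !!X. -/

import Mathlib

/-- Orthogonal of a set of subsets: nonempty-intersection duality. -/
def orth {α : Type*} (T : Set (Set α)) : Set (Set α) :=
  {u' : Set α | ∀ u ∈ T, (u ∩ u').Nonempty}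

/-- Direct image of a set under a relation. -/
def relIm {α β : Type*} (t : Set (α × β)) (u : Set α) : Set β :=
  {b | ∃ a ∈ u, (a, b) ∈ t}

/-- The condition for a relation to be a NUTS morphism: it maps total sets
to total sets under direct image. -/
def isTot {α β : Type*} (TX : Set (Set α)) (TY : Set (Set β)) (t : Set (α × β)) : Prop :=
  ∀ u ∈ TX, relIm t u ∈ TY

/-- Totality of the tensor product: the upward closure of the set of products
of total sets. -/
def tensT {α β : Type*} (TX : Set (Set α)) (TY : Set (Set β)) : Set (Set (α × β)) :=
  {w | ∃ u ∈ TX, ∃ v ∈ TY, u ×ˢ v ⊆ w}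

/-- Totality of the linear arrow `X ⊸ Y = (X ⊗ Y⊥)⊥`. -/
def limplT {α β : Type*} (TX : Set (Set α)) (TY : Set (Set β)) : Set (Set (α × β)) :=
  orth (tensT TX (orth TY))

/-- `u^! = Mfin(u)`. -/
def mfin {α : Type*} (u : Set α) : Set (Multiset α) :=
  {m | ∀ a ∈ m, a ∈ u}

/-- Totality of `!X`: the upward closure of `{u^! | u ∈ 𝒯(X)}`. -/
def bangT {α : Type*} (TX : Set (Set α)) : Set (Set (Multiset α)) :=
  {w | ∃ u ∈ TX, mfin u ⊆ w}

/-- Action of `!` on relations: `!t` relates `[a₁,…,aₙ]` to `[b₁,…,bₙ]`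
when `(aᵢ,bᵢ) ∈ t` for all `i`. -/
def bangRel {α β : Type*} (t : Set (α × β)) : Set (Multiset α × Multiset β) :=
  {p | Multiset.Rel (fun a b => (a, b) ∈ t) p.1 p.2}

/-! The key fact is `(!t)·(u^!) = (t·u)^!`, together with its analogues `der·(u^!) = u` and
`dig·(u^!) = (u^!)^!`. Since the totality of `!X` is generated by the `u^!` and all the target
totalities are upward closed, these identities are all that is needed. -/

lemma relIm_mono {α β : Type*} (t : Set (α × β)) {u v : Set α} (huv : u ⊆ v) :
    relIm t u ⊆ relIm t v :=
  fun _ ⟨a, ha, hab⟩ => ⟨a, huv ha, hab⟩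

lemma isUpperSet_orth {α : Type*} (T : Set (Set α)) : IsUpperSet (orth T) :=
  fun _ _ huv hu w hw => (hu w hw).mono (Set.inter_subset_inter_right w huv)

lemma isUpperSet_bangT {α : Type*} (TX : Set (Set α)) : IsUpperSet (bangT TX) :=
  fun _ _ hvw ⟨u, hu, huv⟩ => ⟨u, hu, huv.trans hvw⟩

lemma mfin_mem_bangT {α : Type*} {TX : Set (Set α)} {u : Set α} (hu : u ∈ TX) :
    mfin u ∈ bangT TX :=
  ⟨u, hu, subset_rfl⟩

lemma isTot_bangT {α β : Type*} {TX : Set (Set α)} {TY : Set (Set β)} {t : Set (Multiset α × β)}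
    (hTY : IsUpperSet TY) (h : ∀ u ∈ TX, relIm t (mfin u) ∈ TY) : isTot (bangT TX) TY t :=
  fun _ ⟨u, hu, huw⟩ => hTY (relIm_mono t huw) (h u hu)

lemma exists_rel_of_forall_mem {α β : Type*} {r : α → β → Prop} {u : Set α} {m : Multiset β}
    (h : ∀ b ∈ m, ∃ a ∈ u, r a b) : ∃ m' ∈ mfin u, Multiset.Rel r m' m := by
  induction m using Multiset.induction with
  | empty => exact ⟨0, fun _ ha => absurd ha (Multiset.notMem_zero _), Multiset.Rel.zero⟩
  | cons b m ih =>
    obtain ⟨a, ha, hab⟩ := h b (Multiset.mem_cons_self b m)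
    obtain ⟨m', hm', hrel⟩ := ih fun b' hb' => h b' (Multiset.mem_cons_of_mem hb')
    refine ⟨a ::ₘ m', fun x hx => ?_, hrel.cons hab⟩
    rcases Multiset.mem_cons.mp hx with rfl | hx
    exacts [ha, hm' x hx]

lemma relIm_bangRel_mfin {α β : Type*} (t : Set (α × β)) (u : Set α) :
    relIm (bangRel t) (mfin u) = mfin (relIm t u) := by
  ext m
  constructor
  · rintro ⟨m', hm', hrel⟩ b hb
    obtain ⟨a, ha, hab⟩ := Multiset.exists_mem_of_rel_of_mem (Multiset.rel_flip.mpr hrel) hb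
    exact ⟨a, hm' a ha, hab⟩
  · exact exists_rel_of_forall_mem

lemma relIm_der_mfin {α : Type*} (u : Set α) :
    relIm {p : Multiset α × α | p.1 = {p.2}} (mfin u) = u := by
  ext a
  constructor
  · rintro ⟨m, hm, hma : m = {a}⟩
    exact hm a (hma ▸ Multiset.mem_singleton_self a)
  · intro ha
    exact ⟨{a}, fun x hx => Multiset.mem_singleton.mp hx ▸ ha, rfl⟩

lemma relIm_dig_mfin {α : Type*} (u : Set α) :
    relIm {p : Multiset α × Multiset (Multiset α) | p.1 = p.2.sum} (mfin u) = mfin (mfin u) := by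
  ext M
  constructor
  · rintro ⟨s, hs, hsM : s = M.sum⟩ m hm a ha
    exact hs a (hsM ▸ Multiset.mem_join.mpr ⟨m, hm, ha⟩)
  · intro hM
    refine ⟨M.sum, fun a ha => ?_, rfl⟩
    obtain ⟨m, hm, ha⟩ := Multiset.mem_join.mp ha
    exact hM m hm a ha

theorem bang_der_dig_morphisms_general {α β : Type*} (TX : Set (Set α)) (TY : Set (Set β))
    (hX : TX = orth (orth TX)) :
    (∀ t : Set (α × β), isTot TX TY t → isTot (bangT TX) (bangT TY) (bangRel t)) ∧
    isTot (bangT TX) TX {p : Multiset α × α | p.1 = {p.2}} ∧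
    isTot (bangT TX) (bangT (bangT TX))
      {p : Multiset α × Multiset (Multiset α) | p.1 = p.2.sum} := by
  refine ⟨fun t ht => ?_, ?_, ?_⟩
  · refine isTot_bangT (isUpperSet_bangT TY) fun u hu => ?_
    rw [relIm_bangRel_mfin]
    exact mfin_mem_bangT (ht u hu)
  · refine isTot_bangT (hX ▸ isUpperSet_orth _) fun u hu => ?_
    rwa [relIm_der_mfin]
  · refine isTot_bangT (isUpperSet_bangT _) fun u hu => ?_
    rw [relIm_dig_mfin]
    exact mfin_mem_bangT (mfin_mem_bangT hu)

/-- If `t : X → Y` is a NUTS morphism then `!t : !X → !Y` is one; moreover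
dereliction `der_X : !X → X` and digging `dig_X : !X → !!X` are NUTS
morphisms. -/
theorem bang_der_dig_morphisms {α β : Type*} (TX : Set (Set α)) (TY : Set (Set β))
    (hX : TX = orth (orth TX)) (hY : TY = orth (orth TY)) :
    (∀ t : Set (α × β), isTot TX TY t → isTot (bangT TX) (bangT TY) (bangRel t)) ∧
    isTot (bangT TX) TX {p : Multiset α × α | p.1 = {p.2}} ∧
    isTot (bangT TX) (bangT (bangT TX))
      {p : Multiset α × Multiset (Multiset α) | p.1 = p.2.sum} :=
  bang_der_dig_morphisms_general TX TY hX
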